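/- arXiv:1707.03563 — 2 statements merged into one kernel-verified Lean document; each statement's English description precedes it below -/
import Mathlib

section
/- For a finite set L and nonnegative integer c, the set of (L,c)-codewords equipped with the domination order is a well-quasi-ordering. -/
/-!
Encode a codeword as the list of pairs `(λ j, ζ j)`, with gap `0` at the last position; domination
is then the gap embedding `GapEmbeds 0`. Cutting a word after each gap `0` writes it as a
concatenation of blocks, and a Higman embedding of the block sequences glues to a gap embedding of
the words. Lowering every gap of a block by one gives a word with gaps at most `k` whose gap
embeddings lift back to the block. So, by induction on the gap bound with Higman's lemma at each
step (the base case being the single-entry blocks over the finite alphabet), the words with gaps at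
most `c` are well-quasi-ordered.
-/

/-- An `(L,c)`-codeword: a positive length `n`, labels `lab : [1,n] → L`,
and gaps `gap : [1,n-1] → {0,…,c}` (values outside the range are irrelevant). -/
structure Codeword (L : Type) (c : ℕ) where
  n : ℕ
  pos : 0 < n
  lab : ℕ → L
  gap : ℕ → ℕ
  gap_le : ∀ i, gap i ≤ c

/-- `f` certifies that `w` is dominated by `w'`. -/
def DominatesVia {L : Type} {c : ℕ} (f : ℕ → ℕ) (w w' : Codeword L c) : Prop :=
  (∀ j, 1 ≤ j → j ≤ w.n → 1 ≤ f j ∧ f j ≤ w'.n) ∧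
  (∀ j j', 1 ≤ j → j < j' → j' ≤ w.n → f j < f j') ∧
  (∀ j, 1 ≤ j → j ≤ w.n → w.lab j = w'.lab (f j)) ∧
  (∀ j, 1 ≤ j → j + 1 ≤ w.n → ∀ i, f j ≤ i → i ≤ f (j + 1) - 1 → w.gap j ≤ w'.gap i)

/-- The domination order on `(L,c)`-codewords. -/
def Dominates {L : Type} {c : ℕ} (w w' : Codeword L c) : Prop :=
  ∃ f, DominatesVia f w w'

theorem Set.PartiallyWellOrderedOn.of_mapsTo {α β : Type*} {r : α → α → Prop}
    {r' : β → β → Prop} {s : Set α} {t : Set β} {f : α → β}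
    (ht : t.PartiallyWellOrderedOn r') (hf : Set.MapsTo f s t)
    (hr : ∀ a ∈ s, ∀ b ∈ s, r' (f a) (f b) → r a b) : s.PartiallyWellOrderedOn r := by
  refine Set.partiallyWellOrderedOn_iff_exists_lt.2 fun x hx => ?_
  obtain ⟨m, n, hmn, h⟩ := ht.exists_lt fun n => hf (hx n)
  exact ⟨m, n, hmn, hr _ (hx m) _ (hx n) h⟩

namespace GapEmbedding

variable {α : Type*}

/-- `GapEmbeds g u v`: `u` embeds into `v` so that every entry of `v` skipped before the first
match has gap at least `g`, and every entry of `v` from the image of `u[m]` up to the image of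
`u[m+1]` has gap at least that of `u[m]`. -/
inductive GapEmbeds : ℕ → List (α × ℕ) → List (α × ℕ) → Prop
  | nil (g : ℕ) (v : List (α × ℕ)) : GapEmbeds g [] v
  | cons (g : ℕ) (a : α) {h h' : ℕ} {u v : List (α × ℕ)} :
      h ≤ h' → GapEmbeds h u v → GapEmbeds g ((a, h) :: u) ((a, h') :: v)
  | skip {g : ℕ} (p : α × ℕ) {u v : List (α × ℕ)} :
      g ≤ p.2 → GapEmbeds g u v → GapEmbeds g u (p :: v)

namespace GapEmbeds

theorem eq_nil {g : ℕ} {u : List (α × ℕ)} (h : GapEmbeds g u []) : u = [] := by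
  cases h; rfl

theorem refl (g : ℕ) : ∀ u : List (α × ℕ), GapEmbeds g u u
  | [] => nil g []
  | (a, h) :: u => cons g a le_rfl (refl h u)

theorem mono {g g' : ℕ} {u v : List (α × ℕ)} (hg : g' ≤ g) (h : GapEmbeds g u v) :
    GapEmbeds g' u v := by
  induction h with
  | nil _ v => exact nil g' v
  | cons _ a hle h _ => exact cons g' a hle h
  | skip p hp _ ih => exact skip p (hg.trans hp) (ih hg)

theorem trans_min {g₁ g₂ : ℕ} {u v w : List (α × ℕ)} (h₁ : GapEmbeds g₁ u v)
    (h₂ : GapEmbeds g₂ v w) : GapEmbeds (min g₁ g₂) u w := by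
  induction h₂ generalizing g₁ u with
  | nil _ w => cases h₁.eq_nil; exact nil _ w
  | cons _ a hle _ ih =>
    cases h₁ with
    | nil => exact nil _ _
    | cons _ _ hle₁ h₁ => exact cons _ a (hle₁.trans hle) (by simpa [hle₁] using ih h₁)
    | skip _ hp h₁ =>
      refine skip _ ((min_le_left _ _).trans (hp.trans hle)) ?_
      exact (ih h₁).mono (by simp [hp])
  | skip p hp _ ih => exact skip p ((min_le_right _ _).trans hp) (ih h₁)

instance (g : ℕ) : IsPreorder (List (α × ℕ)) (GapEmbeds g) where
  refl := refl g
  trans _ _ _ h₁ h₂ := by simpa using h₁.trans_min h₂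

theorem append_left {u v : List (α × ℕ)} (h : GapEmbeds 0 u v) :
    ∀ w, GapEmbeds 0 u (w ++ v)
  | [] => h
  | p :: w => skip p (Nat.zero_le _) (append_left h w)

end GapEmbeds

inductive IsBlock : List (α × ℕ) → Prop
  | single (a : α) : IsBlock [(a, 0)]
  | cons {p : α × ℕ} {b : List (α × ℕ)} : p.2 ≠ 0 → IsBlock b → IsBlock (p :: b)

theorem IsBlock.ne_nil {b : List (α × ℕ)} (hb : IsBlock b) : b ≠ [] := by
  cases hb <;> simp

namespace GapEmbeds

/-- The last entry of a block has gap `0`, so after it the bound resets to `0`. -/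
theorem append {g : ℕ} {u v u' v' : List (α × ℕ)} (hu : IsBlock u) (h : GapEmbeds g u v)
    (h' : GapEmbeds 0 u' v') : GapEmbeds g (u ++ u') (v ++ v') := by
  induction h with
  | nil => exact absurd rfl hu.ne_nil
  | cons g a hle h ih =>
    cases hu with
    | single => exact cons g a hle (h'.append_left _)
    | cons _ hu => exact cons g a hle (ih hu)
  | skip p hp _ ih => exact skip p hp (ih hu)

theorem flatten_of_sublistForall₂ {bs bs' : List (List (α × ℕ))}
    (h : List.SublistForall₂ (GapEmbeds 0) bs bs') (hbs : ∀ b ∈ bs, IsBlock b) :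
    GapEmbeds 0 bs.flatten bs'.flatten := by
  induction h with
  | nil => exact nil 0 _
  | cons hb _ ih =>
    simp only [List.forall_mem_cons] at hbs
    exact append hbs.1 hb (ih hbs.2)
  | cons_right _ ih => exact (ih hbs).append_left _

end GapEmbeds

def decGaps (u : List (α × ℕ)) : List (α × ℕ) := u.map fun p => (p.1, p.2 - 1)

@[simp] theorem decGaps_cons (p : α × ℕ) (u : List (α × ℕ)) :
    decGaps (p :: u) = (p.1, p.2 - 1) :: decGaps u := rfl

theorem GapEmbeds.of_decGaps {h₀ : ℕ} {u v : List (α × ℕ)} (hu : IsBlock u) (hv : IsBlock v)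
    (h : GapEmbeds (h₀ - 1) (decGaps u) (decGaps v)) : GapEmbeds h₀ u v := by
  induction hv generalizing h₀ u with
  | single a =>
    cases hu with
    | single b =>
      cases h with
      | cons _ _ _ h => exact cons h₀ a le_rfl (nil 0 [])
      | skip _ _ h => cases h.eq_nil
    | cons _ hu =>
      cases h with
      | cons _ _ _ h => exact absurd (List.map_eq_nil_iff.1 h.eq_nil) hu.ne_nil
      | skip _ _ h => cases h.eq_nil
  | @cons q v hq hv ih =>
    obtain ⟨c, m⟩ := q
    cases hu with
    | single b =>
      cases h with
      | cons _ _ _ h => exact cons h₀ c (Nat.zero_le _) (nil 0 v)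
      | skip _ hle h => exact skip _ (by simp at hq hle ⊢; omega) (ih (IsBlock.single b) h)
    | @cons p u hp hu =>
      obtain ⟨b, n⟩ := p
      cases h with
      | cons _ _ hle h => exact cons h₀ c (by simp at hp hq hle; omega) (ih hu h)
      | skip _ hle h => exact skip _ (by simp at hq hle ⊢; omega) (ih (hu.cons hp) h)

def EndsInZero (u : List (α × ℕ)) : Prop := ∀ p ∈ u.getLast?, p.2 = 0

theorem exists_isBlock_flatten_eq : ∀ {u : List (α × ℕ)}, EndsInZero u →
    ∃ bs : List (List (α × ℕ)), (∀ b ∈ bs, IsBlock b) ∧ bs.flatten = u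
  | [], _ => ⟨[], by simp, rfl⟩
  | [(a, n)], hu => by
    obtain rfl : n = 0 := hu (a, n) rfl
    exact ⟨[[(a, 0)]], by simpa using IsBlock.single a, rfl⟩
  | (a, n) :: q :: u, hu => by
    rw [EndsInZero, List.getLast?_cons_cons] at hu
    obtain ⟨bs, hbs, hflat⟩ := exists_isBlock_flatten_eq hu
    by_cases hn : n = 0
    · subst hn
      exact ⟨[(a, 0)] :: bs, by simpa using ⟨IsBlock.single a, hbs⟩, by simp [hflat]⟩
    · obtain _ | ⟨b, bs⟩ := bs
      · simp at hflat
      · simp only [List.forall_mem_cons] at hbs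
        exact ⟨((a, n) :: b) :: bs, by simpa using ⟨hbs.1.cons hn, hbs.2⟩,
          by simp [← hflat]⟩

def gapWords (α : Type*) (k : ℕ) : Set (List (α × ℕ)) :=
  {u | EndsInZero u ∧ ∀ p ∈ u, p.2 ≤ k}

def gapBlocks (α : Type*) (k : ℕ) : Set (List (α × ℕ)) :=
  {b | IsBlock b ∧ ∀ p ∈ b, p.2 ≤ k}

theorem IsBlock.endsInZero {b : List (α × ℕ)} (hb : IsBlock b) : EndsInZero b := by
  induction hb with
  | single a => simp [EndsInZero]
  | @cons p b _ hb ih =>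
    obtain ⟨q, b, rfl⟩ := List.exists_cons_of_ne_nil hb.ne_nil
    rwa [EndsInZero, List.getLast?_cons_cons]

theorem EndsInZero.decGaps {u : List (α × ℕ)} (hu : EndsInZero u) : EndsInZero (decGaps u) := by
  intro p hp
  simp only [GapEmbedding.decGaps, List.getLast?_map, Option.mem_def,
    Option.map_eq_some_iff] at hp
  obtain ⟨q, hq, rfl⟩ := hp
  simp [hu q hq]

theorem partiallyWellOrderedOn_gapBlocks_zero [Finite α] :
    (gapBlocks α 0).PartiallyWellOrderedOn (GapEmbeds 0) := by
  refine (Set.finite_range fun a : α => [(a, 0)]).partiallyWellOrderedOn.mono ?_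
  rintro b ⟨hb | ⟨hp, -⟩, hgap⟩
  · exact ⟨_, rfl⟩
  · exact absurd (Nat.le_zero.1 (hgap _ List.mem_cons_self)) hp

theorem partiallyWellOrderedOn_gapWords_of_gapBlocks {k : ℕ}
    (h : (gapBlocks α k).PartiallyWellOrderedOn (GapEmbeds 0)) :
    (gapWords α k).PartiallyWellOrderedOn (GapEmbeds 0) := by
  have higman := h.partiallyWellOrderedOn_sublistForall₂ (GapEmbeds 0)
  refine (higman.image_of_monotone_on fun bs hbs _ _ hrel =>
    GapEmbeds.flatten_of_sublistForall₂ hrel fun b hb => (hbs b hb).1).mono ?_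
  rintro u ⟨hu, hgap⟩
  obtain ⟨bs, hbs, rfl⟩ := exists_isBlock_flatten_eq hu
  exact ⟨bs, fun b hb => ⟨hbs b hb, fun p hp => hgap p (List.mem_flatten.2 ⟨b, hb, hp⟩)⟩, rfl⟩

theorem partiallyWellOrderedOn_gapBlocks_succ {k : ℕ}
    (h : (gapWords α k).PartiallyWellOrderedOn (GapEmbeds 0)) :
    (gapBlocks α (k + 1)).PartiallyWellOrderedOn (GapEmbeds 0) := by
  refine h.of_mapsTo (f := decGaps) ?_ fun u hu v hv huv =>
    GapEmbeds.of_decGaps hu.1 hv.1 huv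
  rintro b ⟨hb, hgap⟩
  refine ⟨hb.endsInZero.decGaps, ?_⟩
  simp only [GapEmbedding.decGaps, List.mem_map]
  rintro _ ⟨p, hp, rfl⟩
  have := hgap p hp
  dsimp only
  omega

theorem partiallyWellOrderedOn_gapWords [Finite α] (k : ℕ) :
    (gapWords α k).PartiallyWellOrderedOn (GapEmbeds 0) := by
  refine partiallyWellOrderedOn_gapWords_of_gapBlocks ?_
  induction k with
  | zero => exact partiallyWellOrderedOn_gapBlocks_zero
  | succ k ih =>
    exact partiallyWellOrderedOn_gapBlocks_succ (partiallyWellOrderedOn_gapWords_of_gapBlocks ih)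

def consIdx (F : ℕ → ℕ) : ℕ → ℕ
  | 0 => 0
  | m + 1 => F m + 1

theorem strictMono_consIdx {F : ℕ → ℕ} (hF : StrictMono F) : StrictMono (consIdx F) :=
  strictMono_nat_of_lt_succ fun
    | 0 => Nat.succ_pos _
    | m + 1 => Nat.succ_lt_succ (hF m.lt_succ_self)

/-- `F` realises `GapEmbeds g u v` on indices. -/
structure IsGapIndex (d : α × ℕ) (g : ℕ) (F : ℕ → ℕ) (u v : List (α × ℕ)) : Prop where
  strictMono : StrictMono F
  lt_length : ∀ m < u.length, F m < v.length
  fst_eq : ∀ m < u.length, (u.getD m d).1 = (v.getD (F m) d).1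
  le_of_lt_zero : ∀ i < F 0, g ≤ (v.getD i d).2
  le_of_mem_Ico : ∀ m, m + 1 < u.length → ∀ i, F m ≤ i → i < F (m + 1) →
    (u.getD m d).2 ≤ (v.getD i d).2

namespace IsGapIndex

variable {d : α × ℕ} {g : ℕ} {F : ℕ → ℕ} {u v : List (α × ℕ)}

theorem nil (d : α × ℕ) (g : ℕ) (v : List (α × ℕ)) : IsGapIndex d g id [] v where
  strictMono := strictMono_id
  lt_length := by simp
  fst_eq := by simp
  le_of_lt_zero := by simp
  le_of_mem_Ico := by simp

theorem cons {h h' : ℕ} (a : α) (hle : h ≤ h') (hF : IsGapIndex d h F u v) :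
    IsGapIndex d g (consIdx F) ((a, h) :: u) ((a, h') :: v) where
  strictMono := strictMono_consIdx hF.strictMono
  lt_length
    | 0, _ => by simp [consIdx]
    | m + 1, hm => by simpa [consIdx] using hF.lt_length m (by simpa using hm)
  fst_eq
    | 0, _ => rfl
    | m + 1, hm => by simpa [consIdx] using hF.fst_eq m (by simpa using hm)
  le_of_lt_zero := by simp [consIdx]
  le_of_mem_Ico
    | 0, _, 0, _, _ => hle
    | 0, hm, i + 1, _, hi => by
      simpa using hF.le_of_lt_zero i (by simpa [consIdx] using hi)
    | m + 1, hm, i + 1, hmi, hi => by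
      simpa using hF.le_of_mem_Ico m (by simpa using hm) i (by simpa [consIdx] using hmi)
        (by simpa [consIdx] using hi)
    | m + 1, _, 0, hmi, _ => by simp [consIdx] at hmi

theorem skip (p : α × ℕ) (hp : g ≤ p.2) (hF : IsGapIndex d g F u v) :
    IsGapIndex d g (fun m => F m + 1) u (p :: v) where
  strictMono := hF.strictMono.add_const 1
  lt_length m hm := by simpa using hF.lt_length m hm
  fst_eq m hm := hF.fst_eq m hm
  le_of_lt_zero
    | 0, _ => hp
    | i + 1, hi => hF.le_of_lt_zero i (by omega)
  le_of_mem_Ico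
    | m, hm, 0, hmi, _ => by omega
    | m, hm, i + 1, hmi, hi => hF.le_of_mem_Ico m hm i (by omega) (by omega)

end IsGapIndex

theorem GapEmbeds.exists_isGapIndex (d : α × ℕ) {g : ℕ} {u v : List (α × ℕ)}
    (h : GapEmbeds g u v) : ∃ F, IsGapIndex d g F u v := by
  induction h with
  | nil g v => exact ⟨id, .nil d g v⟩
  | cons g a hle _ ih =>
    obtain ⟨F, hF⟩ := ih
    exact ⟨_, hF.cons a hle⟩
  | skip p hp _ ih =>
    obtain ⟨F, hF⟩ := ih
    exact ⟨_, hF.skip p hp⟩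

end GapEmbedding

namespace Codeword

open GapEmbedding

variable {L : Type} {c : ℕ}

def toGapWord (w : Codeword L c) : List (L × ℕ) :=
  (List.range w.n).map fun k => (w.lab (k + 1), if k + 1 < w.n then w.gap (k + 1) else 0)

@[simp] theorem length_toGapWord (w : Codeword L c) : w.toGapWord.length = w.n := by
  simp [toGapWord]

theorem getD_toGapWord (w : Codeword L c) (d : L × ℕ) {k : ℕ} (hk : k < w.n) :
    w.toGapWord.getD k d = (w.lab (k + 1), if k + 1 < w.n then w.gap (k + 1) else 0) := by
  rw [List.getD_eq_getElem _ _ (by simpa using hk)]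
  simp [toGapWord]

theorem toGapWord_mem_gapWords (w : Codeword L c) : w.toGapWord ∈ gapWords L c := by
  refine ⟨fun p hp => ?_, fun p hp => ?_⟩
  · simp only [toGapWord, List.getLast?_map, List.getLast?_range, w.pos.ne', if_false,
      Option.map_some, Option.mem_def, Option.some.injEq] at hp
    subst hp
    simp [Nat.sub_add_cancel w.pos]
  · simp only [toGapWord, List.mem_map, List.mem_range] at hp
    obtain ⟨k, -, rfl⟩ := hp
    split_ifs
    exacts [w.gap_le _, Nat.zero_le c]

theorem dominates_of_gapEmbeds {w w' : Codeword L c}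
    (h : GapEmbeds 0 w.toGapWord w'.toGapWord) : Dominates w w' := by
  obtain ⟨F, hF⟩ := h.exists_isGapIndex (w.lab 1, 0)
  refine ⟨fun j => F (j - 1) + 1, fun j hj hjn => ?_, fun j j' hj hjj' _ => ?_,
    fun j hj hjn => ?_, fun j hj hjn i hi hi' => ?_⟩ <;> dsimp only at *
  · have := hF.lt_length (j - 1) (by simp; omega)
    simp only [length_toGapWord] at this
    omega
  · have := hF.strictMono (show j - 1 < j' - 1 by omega)
    omega
  · have := hF.fst_eq (j - 1) (by simp; omega)
    have hF' := hF.lt_length (j - 1) (by simp; omega)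
    simp only [length_toGapWord] at hF'
    rw [getD_toGapWord _ _ (by omega), getD_toGapWord _ _ hF', Nat.sub_add_cancel hj] at this
    exact this
  · simp only [Nat.add_sub_cancel] at hi'
    have hF' := hF.lt_length j (by simp; omega)
    simp only [length_toGapWord] at hF'
    have := hF.le_of_mem_Ico (j - 1) (by simp; omega) (i - 1) (by omega)
      (by rw [Nat.sub_add_cancel hj]; omega)
    rw [getD_toGapWord _ _ (by omega), getD_toGapWord _ _ (by omega), Nat.sub_add_cancel hj,
      Nat.sub_add_cancel (by omega), if_pos (by omega), if_pos (by omega)] at this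
    exact this

end Codeword

/-- For a finite label set `L` and nonnegative integer `c`, the set of
`(L,c)`-codewords with the domination order is a well-quasi-ordering. -/
theorem stmt2 (L : Type) [Finite L] (c : ℕ) :
    ∀ x : ℕ → Codeword L c, ∃ i j, i < j ∧ Dominates (x i) (x j) := by
  intro x
  obtain ⟨i, j, hij, h⟩ := (GapEmbedding.partiallyWellOrderedOn_gapWords c).exists_lt
    fun n => (x n).toGapWord_mem_gapWords
  exact ⟨i, j, hij, Codeword.dominates_of_gapEmbeds h⟩
end

section
/- The family of oriented cycles {C_{2k} : k ≥ 2}, where C_{2k} is obtained from the undirected cycle on 2k vertices by orienting the edges alternately clockwise and counter-clockwise, forms an infinite antichain under the strong immersion relation on digraphs. -/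
/-- A (finite) digraph on natural-number vertices. -/
structure Digr where
  verts : Finset ℕ
  arcs : Finset (ℕ × ℕ)

/-- The list of consecutive arcs of a path given as a list of vertices. -/
def pathArcs (l : List ℕ) : List (ℕ × ℕ) := l.zip l.tail

/-- `l` is a directed path in `D` from `u` to `v` (with at least one arc). -/
def IsDipath (D : Digr) (l : List ℕ) (u v : ℕ) : Prop :=
  l.head? = some u ∧ l.getLast? = some v ∧ 2 ≤ l.length ∧
  ∀ a ∈ pathArcs l, a ∈ D.arcs

/-- A strong immersion of `H` in `D`. -/
structure StrongImmersion (H D : Digr) where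
  μv : ℕ → ℕ
  μe : ℕ × ℕ → List ℕ
  inj : ∀ u ∈ H.verts, ∀ v ∈ H.verts, μv u = μv v → u = v
  mapsTo : ∀ u ∈ H.verts, μv u ∈ D.verts
  path : ∀ e ∈ H.arcs, IsDipath D (μe e) (μv e.1) (μv e.2)
  disj : ∀ e ∈ H.arcs, ∀ f ∈ H.arcs, e ≠ f →
    ∀ a ∈ pathArcs (μe e), a ∉ pathArcs (μe f)
  avoid : ∀ e ∈ H.arcs, ∀ w ∈ H.verts, w ≠ e.1 → w ≠ e.2 → μv w ∉ μe e

/-- `H` can be strongly immersed in `D`. -/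
def Immerses (H D : Digr) : Prop := Nonempty (StrongImmersion H D)

/-- A simple digraph is semi-complete if between any two distinct vertices
at least one arc is present. -/
def SemiComplete (D : Digr) : Prop :=
  (∀ a ∈ D.arcs, a.1 ∈ D.verts ∧ a.2 ∈ D.verts ∧ a.1 ≠ a.2) ∧
  ∀ u ∈ D.verts, ∀ v ∈ D.verts, u ≠ v → (u, v) ∈ D.arcs ∨ (v, u) ∈ D.arcs

/-- A tournament: exactly one arc between any two distinct vertices. -/
def IsTournament (D : Digr) : Prop :=
  (∀ a ∈ D.arcs, a.1 ∈ D.verts ∧ a.2 ∈ D.verts ∧ a.1 ≠ a.2) ∧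
  ∀ u ∈ D.verts, ∀ v ∈ D.verts, u ≠ v → ((u, v) ∈ D.arcs ↔ (v, u) ∉ D.arcs)

/-- A vertex ordering: a bijection from the vertices onto positions `1..n`. -/
def IsOrdering (D : Digr) (π : ℕ → ℕ) : Prop :=
  Set.BijOn π ↑D.verts ↑(Finset.Icc 1 D.verts.card)

/-- The cut at position `i`: feedback arcs from the last vertices to the first `i`. -/
def cutAt (D : Digr) (π : ℕ → ℕ) (i : ℕ) : Finset (ℕ × ℕ) :=
  D.arcs.filter (fun a => π a.2 ≤ i ∧ i < π a.1)

/-- The width of a vertex ordering. -/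
def orderWidth (D : Digr) (π : ℕ → ℕ) : ℕ :=
  (Finset.range (D.verts.card + 1)).sup fun i => (cutAt D π i).card

/-- The ordering has width at most `c`. -/
def WidthLE (D : Digr) (π : ℕ → ℕ) (c : ℕ) : Prop :=
  ∀ i, (cutAt D π i).card ≤ c

/-- The cutwidth of `D` is at most `c`. -/
def CutwidthLE (D : Digr) (c : ℕ) : Prop :=
  ∃ π, IsOrdering D π ∧ WidthLE D π c

/-- The cycle on `2k` vertices with arcs oriented alternately: every even vertex
is a source, sending arcs to both of its neighbours on the cycle. -/
def altCycle (k : ℕ) : Digr where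
  verts := Finset.range (2 * k)
  arcs :=
    (Finset.range k).image (fun j => (2 * j, (2 * j + 1) % (2 * k))) ∪
    (Finset.range k).image (fun j => (2 * j, (2 * j + (2 * k - 1)) % (2 * k)))

/-!
Every vertex of `C_{2l}` is a source or a sink, so its directed paths are single arcs and a
strong immersion `C_{2k} → C_{2l}` is an injective homomorphism of the underlying cycles.
For `k ≥ 2` the two neighbours of a vertex of `C_{2k}` are distinct, so they are sent onto both
neighbours of its image; hence the image is closed under the rotation of `C_{2l}`, it is all of
`C_{2l}`, and `2k = 2l`.
-/

lemma IsDipath.mem_arcs {D : Digr} {p : List ℕ} {u v : ℕ} (h : IsDipath D p u v)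
    (hD : ∀ a ∈ D.arcs, ∀ b ∈ D.arcs, a.2 ≠ b.1) : (u, v) ∈ D.arcs := by
  obtain ⟨hu, hv, hlen, harcs⟩ := h
  match p, hu, hv, hlen, harcs with
  | [a, b], hu, hv, _, harcs =>
    obtain rfl : a = u := Option.some.inj hu
    obtain rfl : b = v := by simpa using hv
    exact harcs _ (by simp [pathArcs])
  | a :: b :: c :: _, _, _, _, harcs =>
    exact absurd rfl
      (hD (a, b) (harcs _ (by simp [pathArcs])) (b, c) (harcs _ (by simp [pathArcs])))

def CycAdj (n x y : ℕ) : Prop := y = (x + 1) % n ∨ x = (y + 1) % n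

lemma CycAdj.symm {n x y : ℕ} (h : CycAdj n x y) : CycAdj n y x := Or.symm h

lemma add_one_mod_of_lt {n x : ℕ} (hx : x < n) : (x + 1) % n = if x + 1 = n then 0 else x + 1 := by
  split_ifs with h
  · rw [h, Nat.mod_self]
  · exact Nat.mod_eq_of_lt (by omega)

lemma eq_of_add_one_mod_eq {n a b : ℕ} (ha : a < n) (hb : b < n)
    (h : (a + 1) % n = (b + 1) % n) : a = b := by
  rw [add_one_mod_of_lt ha, add_one_mod_of_lt hb] at h
  split_ifs at h <;> omega

lemma add_one_mod_eq_of_cycAdj {n x a b : ℕ} (ha : a < n) (hb : b < n) (hab : a ≠ b)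
    (hxa : CycAdj n x a) (hxb : CycAdj n x b) : a = (x + 1) % n ∨ b = (x + 1) % n := by
  rcases hxa with h | ha'
  · exact Or.inl h
  rcases hxb with h | hb'
  · exact Or.inr h
  exact absurd (eq_of_add_one_mod_eq ha hb (ha'.symm.trans hb')) hab

lemma forall_lt_of_add_one_mod {n x₀ : ℕ} {P : ℕ → Prop} (hx₀ : P x₀)
    (hP : ∀ x, P x → P ((x + 1) % n)) : ∀ y < n, P y := by
  have hiter : ∀ t, P ((x₀ + t + 1) % n) := by
    intro t
    induction t with
    | zero => exact hP _ hx₀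
    | succ t ih => simpa [Nat.mod_add_mod, add_assoc] using hP _ ih
  intro y hy
  have hle : x₀ + 1 ≤ n * (x₀ + 1) := Nat.le_mul_of_pos_left _ (by omega)
  simpa [show x₀ + (y + n * (x₀ + 1) - x₀ - 1) + 1 = y + n * (x₀ + 1) by omega,
    Nat.add_mul_mod_self_left, Nat.mod_eq_of_lt hy] using hiter (y + n * (x₀ + 1) - x₀ - 1)

theorem eq_of_injOn_of_cycAdj {m n : ℕ} {f : ℕ → ℕ} (hm : 3 ≤ m) (hmaps : ∀ v < m, f v < n)
    (hinj : Set.InjOn f (Finset.range m)) (hadj : ∀ v < m, CycAdj n (f v) (f ((v + 1) % m))) :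
    m = n := by
  set S := (Finset.range m).image f
  have hclosed : ∀ x, x ∈ S → (x + 1) % n ∈ S := by
    simp only [S, Finset.mem_image, Finset.mem_range]
    rintro _ ⟨v, hv, rfl⟩
    obtain ⟨p, hp, hpv⟩ : ∃ p < m, (p + 1) % m = v :=
      ⟨(v + m - 1) % m, Nat.mod_lt _ (by omega), by
        rw [Nat.mod_add_mod, show v + m - 1 + 1 = v + m by omega, Nat.add_mod_right,
          Nat.mod_eq_of_lt hv]⟩
    have hsucc : (v + 1) % m ≠ p := by
      have hpv' := add_one_mod_of_lt hp
      rw [hpv] at hpv'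
      rw [add_one_mod_of_lt hv]
      split_ifs at hpv' ⊢ <;> omega
    have hv' : (v + 1) % m < m := Nat.mod_lt _ (by omega)
    rcases add_one_mod_eq_of_cycAdj (hmaps _ hv') (hmaps p hp)
        (hinj.ne (by simpa using hv') (by simpa using hp) hsucc) (hadj v hv)
        (hpv ▸ hadj p hp).symm with h | h
    exacts [⟨_, hv', h⟩, ⟨p, hp, h⟩]
  have hrange : Finset.range n ⊆ S := fun y hy =>
    forall_lt_of_add_one_mod (P := (· ∈ S)) (Finset.mem_image_of_mem f (Finset.mem_range.2
      (show 0 < m by omega))) hclosed y (Finset.mem_range.1 hy)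
  have hnm : n ≤ m := by
    simpa using (Finset.card_le_card hrange).trans Finset.card_image_le
  have hmn : m ≤ n := by
    simpa using Finset.card_le_card_of_injOn f
      (fun v hv => Finset.mem_coe.2 (Finset.mem_range.2 (hmaps v (Finset.mem_range.1 hv)))) hinj
  omega

lemma altCycle_arc_parity_and_cycAdj {l : ℕ} {a : ℕ × ℕ} (ha : a ∈ (altCycle l).arcs) :
    a.1 % 2 = 0 ∧ a.2 % 2 = 1 ∧ CycAdj (2 * l) a.1 a.2 := by
  simp only [altCycle, Finset.mem_union, Finset.mem_image, Finset.mem_range] at ha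
  rcases ha with ⟨j, hj, rfl⟩ | ⟨j, hj, rfl⟩
  · have hy := add_one_mod_of_lt (show 2 * j < 2 * l by omega)
    rw [if_neg (by omega)] at hy
    refine ⟨by omega, by simp only [hy]; omega, Or.inl ?_⟩
    simp only [hy]
  · have hy : (2 * j + (2 * l - 1)) % (2 * l) = if j = 0 then 2 * l - 1 else 2 * j - 1 := by
      split_ifs with h
      · subst h; rw [Nat.mul_zero, Nat.zero_add]; exact Nat.mod_eq_of_lt (by omega)
      · rw [show 2 * j + (2 * l - 1) = 2 * j - 1 + 2 * l by omega, Nat.add_mod_right,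
          Nat.mod_eq_of_lt (by omega)]
    simp only [CycAdj, hy]
    split_ifs with h
    · refine ⟨by omega, by omega, Or.inr ?_⟩
      rw [show 2 * l - 1 + 1 = 2 * l by omega, Nat.mod_self]; omega
    · refine ⟨by omega, by omega, Or.inr ?_⟩
      rw [Nat.mod_eq_of_lt (by omega)]; omega

lemma altCycle_arc_snd_ne_fst {l : ℕ} :
    ∀ a ∈ (altCycle l).arcs, ∀ b ∈ (altCycle l).arcs, a.2 ≠ b.1 := fun _ ha _ hb => by
  have := (altCycle_arc_parity_and_cycAdj ha).2.1
  have := (altCycle_arc_parity_and_cycAdj hb).1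
  omega

lemma altCycle_arc_or_reverse_of_lt {k v : ℕ} (hv : v < 2 * k) :
    (v, (v + 1) % (2 * k)) ∈ (altCycle k).arcs ∨ ((v + 1) % (2 * k), v) ∈ (altCycle k).arcs := by
  simp only [altCycle, Finset.mem_union, Finset.mem_image, Finset.mem_range, Prod.mk.injEq]
  rw [add_one_mod_of_lt hv]
  rcases Nat.even_or_odd v with ⟨j, rfl⟩ | ⟨j, rfl⟩
  · refine Or.inl (Or.inl ⟨j, by omega, by omega, ?_⟩)
    rw [add_one_mod_of_lt (show 2 * j < 2 * k by omega)]
    split_ifs <;> omega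
  · split_ifs with h
    · refine Or.inr (Or.inr ⟨0, by omega, by omega, ?_⟩)
      rw [Nat.mul_zero, Nat.zero_add, Nat.mod_eq_of_lt (by omega)]
      omega
    · refine Or.inr (Or.inr ⟨j + 1, by omega, by omega, ?_⟩)
      rw [show 2 * (j + 1) + (2 * k - 1) = 2 * j + 1 + 2 * k by omega, Nat.add_mod_right,
        Nat.mod_eq_of_lt hv]

theorem stmt4_general (k l : ℕ) (hk : 2 ≤ k) (hkl : k ≠ l) :
    ¬ Immerses (altCycle k) (altCycle l) := by
  rintro ⟨μ⟩
  have harc : ∀ e ∈ (altCycle k).arcs, CycAdj (2 * l) (μ.μv e.1) (μ.μv e.2) := fun e he =>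
    (altCycle_arc_parity_and_cycAdj ((μ.path e he).mem_arcs altCycle_arc_snd_ne_fst)).2.2
  refine hkl (Nat.eq_of_mul_eq_mul_left two_pos
    (eq_of_injOn_of_cycAdj (f := μ.μv) (by omega) ?_ ?_ ?_))
  · intro v hv
    simpa [altCycle] using μ.mapsTo v (by simpa [altCycle] using hv)
  · exact fun u hu v hv => μ.inj u (by simpa [altCycle] using hu) v (by simpa [altCycle] using hv)
  · intro v hv
    rcases altCycle_arc_or_reverse_of_lt hv with h | h
    exacts [harc _ h, (harc _ h).symm]

/-- The alternately oriented cycles `C_{2k}`, `k ≥ 2`, form an infinite antichain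
under the strong immersion relation. -/
theorem stmt4 (k l : ℕ) (hk : 2 ≤ k) (hl : 2 ≤ l) (hkl : k ≠ l) :
    ¬ Immerses (altCycle k) (altCycle l) :=
  stmt4_general k l hk hkl
end
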